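/- A JWSS process is vertex-stationary at each time: if Σ_x = (U_T ⊗ U_G) diag(h) (U_T ⊗ U_G)*, then for every time t, the covariance block [Σ_{x_t}]_{i₁,i₂} = [Σ_x]_{N(t−1)+i₁, N(t−1)+i₂} equals U_G diag(s_t) U_G* with s_t(λ_n) = (1/T) ∑_τ H_{n,τ}; in particular it is diagonalized by U_G and is independent of t. -/
import Mathlib


open Matrix Complex
open scoped Kronecker

/-- The normalized DFT matrix of size `T`, entries `(1/√T) e^{2πi τ t / T}`. -/
noncomputable def dftMat (T : ℕ) : Matrix (Fin T) (Fin T) ℂ :=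
  Matrix.of fun t τ =>
    (1 / Real.sqrt T) * Complex.exp (2 * Real.pi * Complex.I * (τ.val : ℂ) * (t.val : ℂ) / T)

lemma dft_mul_conj (T : ℕ) (t τ : Fin T) :
    dftMat T t τ * (starRingEnd ℂ) (dftMat T t τ) = 1 / (T : ℂ) := by
  set θ : ℝ := 2 * Real.pi * τ.val * t.val / T with hθdef
  have hθ : (2 * Real.pi * Complex.I * (τ.val : ℂ) * (t.val : ℂ) / T)
      = ((θ : ℝ) : ℂ) * Complex.I := by rw [hθdef]; push_cast; ring
  have h1 : (starRingEnd ℂ) (Complex.exp ((θ : ℂ) * Complex.I))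
      = Complex.exp (-((θ : ℂ) * Complex.I)) := by
    rw [← Complex.exp_conj]; simp [Complex.conj_ofReal]
  have h2 : Complex.exp ((θ : ℂ) * Complex.I) * Complex.exp (-((θ : ℂ) * Complex.I)) = 1 := by
    rw [← Complex.exp_add]; simp
  have h3 : ((1 : ℂ) / Real.sqrt T) * (starRingEnd ℂ) ((1 : ℂ) / Real.sqrt T)
      = 1 / (T : ℂ) := by
    rw [map_div₀, _root_.map_one, Complex.conj_ofReal, div_mul_div_comm, one_mul,
      ← Complex.ofReal_mul, Real.mul_self_sqrt (Nat.cast_nonneg T)]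
    norm_num
  simp only [dftMat, Matrix.of_apply, hθ, _root_.map_mul, h1]
  calc (1 / (Real.sqrt T : ℂ)) * Complex.exp ((θ : ℂ) * Complex.I) *
        ((starRingEnd ℂ) ((1 : ℂ) / Real.sqrt T) * Complex.exp (-((θ : ℂ) * Complex.I)))
      = ((1 : ℂ) / Real.sqrt T * (starRingEnd ℂ) ((1 : ℂ) / Real.sqrt T)) *
        (Complex.exp ((θ : ℂ) * Complex.I) * Complex.exp (-((θ : ℂ) * Complex.I))) := by ring
    _ = 1 / (T : ℂ) := by rw [h2, h3, mul_one]

/-- A JWSS process is vertex-stationary at each time: if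
`Σ_x = (U_T ⊗ U_G) diag(h) (U_T ⊗ U_G)*` with `U_T` the DFT, then the covariance block
at any time `t` equals `U_G diag(s) U_G*` with `s(λ_n) = (1/T) ∑_τ H_{n,τ}`;
in particular it is diagonalized by `U_G` and independent of `t`. -/
theorem jwss_implies_vwss (N T : ℕ)
    (UG : Matrix (Fin N) (Fin N) ℂ) (hUG : UG ∈ Matrix.unitaryGroup (Fin N) ℂ)
    (h : Fin T × Fin N → ℂ)
    (S : Matrix (Fin T × Fin N) (Fin T × Fin N) ℂ)
    (hS : S = (dftMat T ⊗ₖ UG) * Matrix.diagonal h * (dftMat T ⊗ₖ UG)ᴴ) :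
    ∀ t : Fin T,
      (Matrix.of fun i₁ i₂ => S (t, i₁) (t, i₂))
        = UG * Matrix.diagonal (fun n => (1 / (T : ℂ)) * ∑ τ : Fin T, h (τ, n)) * UGᴴ := by
  intro t
  subst hS
  ext i₁ i₂
  rw [Matrix.of_apply, Matrix.mul_apply, Matrix.mul_apply]
  simp only [Matrix.mul_diagonal, Matrix.conjTranspose_apply, Matrix.kroneckerMap_apply,
    star_mul', Complex.star_def]
  rw [Fintype.sum_prod_type, Finset.sum_comm]
  refine Finset.sum_congr rfl fun n _ => ?_
  have hr : UG i₁ n * (1 / (T : ℂ) * ∑ τ : Fin T, h (τ, n)) * (starRingEnd ℂ) (UG i₂ n)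
      = ∑ τ : Fin T, UG i₁ n * (1 / (T : ℂ) * h (τ, n)) * (starRingEnd ℂ) (UG i₂ n) := by
    rw [Finset.mul_sum, Finset.mul_sum, Finset.sum_mul]
  rw [hr]
  refine Finset.sum_congr rfl fun τ _ => ?_
  have hd := dft_mul_conj T t τ
  calc dftMat T t τ * UG i₁ n * h (τ, n) *
        ((starRingEnd ℂ) (dftMat T t τ) * (starRingEnd ℂ) (UG i₂ n))
      = (dftMat T t τ * (starRingEnd ℂ) (dftMat T t τ)) *
        (UG i₁ n * h (τ, n) * (starRingEnd ℂ) (UG i₂ n)) := by ring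
    _ = UG i₁ n * (1 / (T : ℂ) * h (τ, n)) * (starRingEnd ℂ) (UG i₂ n) := by
        rw [hd]; ring
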